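/- Fix an integer n with 0 ≤ n ≤ N, a real number ρ, and assume β + ρ is not an integer. Let f ∈ ℝ^{N+1} be the vector with components f_ℓ = (n−N)_{N−ℓ} (2α+ρ−N−n)_{N−ℓ} / (β+ρ−N+1)_{N−ℓ} for 0 ≤ ℓ ≤ N. Then f_N = 1 (in particular f ≠ 0) and (X + ρZ) f = (n−α−ρ)(α−n) f, i.e. f is an eigenvector of X + ρZ with eigenvalue (n−α−ρ)(α−n). -/

import Mathlib

/-- The Pochhammer symbol `(a)_k = a(a+1)⋯(a+k−1)`. -/
noncomputable def poch (a : ℝ) (k : ℕ) : ℝ := ∏ i ∈ Finset.range k, (a + i)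

/-- The matrix `Z` with entries `Z_{m,n} = (n−α)δ_{m,n} + δ_{m,n+1}`. -/
noncomputable def Zmat (N : ℕ) (α : ℝ) : Matrix (Fin (N + 1)) (Fin (N + 1)) ℝ :=
  fun m n => (if m = n then (n : ℝ) - α else 0) + (if (m : ℕ) = (n : ℕ) + 1 then 1 else 0)

/-- The matrix `X` with entries `X_{m,n} = −(n−α)²δ_{m,n} − (n−β)δ_{m,n+1}`. -/
noncomputable def Xmat (N : ℕ) (α β : ℝ) : Matrix (Fin (N + 1)) (Fin (N + 1)) ℝ :=
  fun m n => (if m = n then -((n : ℝ) - α) ^ 2 else 0)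
    + (if (m : ℕ) = (n : ℕ) + 1 then -((n : ℝ) - β) else 0)

lemma poch_succ' (a : ℝ) (k : ℕ) : poch a (k+1) = poch a k * (a + k) :=
  Finset.prod_range_succ _ _


/-- For `0 ≤ n ≤ N`, a real `ρ`, and `β + ρ` not an integer, the vector with
components `f_ℓ = (n−N)_{N−ℓ} (2α+ρ−N−n)_{N−ℓ} / (β+ρ−N+1)_{N−ℓ}` satisfies `f_N = 1`
(so `f ≠ 0`) and is an eigenvector of `X + ρZ` with eigenvalue `(n−α−ρ)(α−n)`. -/
theorem evp_solution_f (N : ℕ) (hN : 1 ≤ N) (α β ζ ρ : ℝ)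
    (n : ℕ) (hn : n ≤ N)
    (hint : ∀ z : ℤ, β + ρ ≠ (z : ℝ))
    (f : Fin (N + 1) → ℝ)
    (hf : ∀ ℓ : Fin (N + 1), f ℓ =
      poch ((n : ℝ) - (N : ℝ)) (N - ℓ) * poch (2 * α + ρ - (N : ℝ) - (n : ℝ)) (N - ℓ)
        / poch (β + ρ - (N : ℝ) + 1) (N - ℓ)) :
    f ⟨N, Nat.lt_succ_self N⟩ = 1 ∧ f ≠ 0 ∧
    (Xmat N α β + ρ • Zmat N α).mulVec f
      = (((n : ℝ) - α - ρ) * (α - (n : ℝ))) • f := by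
  have hden : ∀ k : ℕ, poch (β + ρ - N + 1) k ≠ 0 := by
    intro k
    unfold poch
    refine Finset.prod_ne_zero_iff.2 fun i _ => fun h0 => ?_
    apply hint ((N : ℤ) - 1 - (i : ℤ))
    push_cast
    linarith
  have hfN : f ⟨N, Nat.lt_succ_self N⟩ = 1 := by
    rw [hf]; simp [poch]
  refine ⟨hfN, fun h0 => by simp [h0] at hfN, ?_⟩
  funext m
  obtain ⟨m, hm⟩ := m
  simp only [Matrix.mulVec, dotProduct, Matrix.add_apply, Matrix.smul_apply,
    Xmat, Zmat, smul_eq_mul, Pi.smul_apply, add_mul, mul_add, ite_mul, zero_mul,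
    mul_ite, mul_zero, Finset.sum_add_distrib, Finset.sum_ite_eq, Finset.mem_univ, if_true]
  match m, hm with
  | 0, hm =>
    have hzero : ∀ x : Fin (N+1), (0 = (x:ℕ) + 1) ↔ False := fun x => by simp
    simp only [hzero, if_false, Finset.sum_const_zero, add_zero]
    rcases Nat.eq_zero_or_pos n with hn0 | hn1
    · subst hn0; push_cast; ring
    · have hf0 : f ⟨0, hm⟩ = 0 := by
        rw [hf]
        have hz : poch ((n : ℝ) - N) (N - ((⟨0, hm⟩ : Fin (N+1)) : ℕ)) = 0 := by
          simp only [Fin.val_mk, Nat.sub_zero]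
          unfold poch
          refine Finset.prod_eq_zero (i := N - n) (Finset.mem_range.2 (by omega)) ?_
          rw [Nat.cast_sub hn]; ring
        rw [hz]; simp
      rw [hf0]; ring
  | m' + 1, hm =>
    have hm' : m' + 1 ≤ N := Nat.lt_succ_iff.mp hm
    have hm'lt : m' < N + 1 := by omega
    have hcond : ∀ x : Fin (N+1), (m' + 1 = (x:ℕ) + 1) ↔ (x = ⟨m', hm'lt⟩) := by
      intro x; rw [Fin.ext_iff]; simp [eq_comm]
    simp only [hcond, Finset.sum_ite_eq', Finset.mem_univ, if_true]
    have hbm : β + ρ - (m' : ℝ) ≠ 0 := fun h => hint m' (by push_cast at h ⊢; linarith)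
    have hfm : f ⟨m', hm'lt⟩ = f ⟨m' + 1, hm⟩
        * (((n : ℝ) - ((m' : ℝ) + 1)) * (2 * α + ρ - (n : ℝ) - ((m' : ℝ) + 1)))
        / (β + ρ - (m' : ℝ)) := by
      set k := N - (m' + 1) with hkdef
      have hk1 : N - m' = k + 1 := by omega
      have hkr : (k : ℝ) = (N : ℝ) - (m' : ℝ) - 1 := by
        rw [hkdef, Nat.cast_sub hm']; push_cast; ring
      rw [hf ⟨m', hm'lt⟩, hf ⟨m' + 1, hm⟩]
      simp only [Fin.val_mk]
      rw [hk1, ← hkdef, poch_succ', poch_succ', poch_succ', hkr]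
      have hdk := hden k
      have hb2 : β + ρ - (N:ℝ) + 1 + ((N:ℝ) - (m':ℝ) - 1) ≠ 0 := by
        convert hbm using 1; ring
      field_simp
      ring
    rw [hfm]
    field_simp
    push_cast
    ring
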